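/- arXiv:1607.01684 — 3 statements merged into one kernel-verified Lean document; each statement's English description precedes it below -/
import Mathlib

section
/- For every ε > 0 there is an integer s₀ such that the following holds for every admissible s ≥ s₀ and every r ≥ 250000·(log₂ s)³. If there is a zero-error randomized algorithm for GPW^{r×s} whose expected cost on every input is at most √r·s/(log₂ s)^5, then there is a deterministic decision tree Q with outputs in {0, 1, 'no answer'} such that: (i) Q queries at most √r·s/(log₂ s)^4 cells on every input; (ii) whenever Q outputs a bit on input X, that bit equals GPW^{r×s}(X); and (iii) Pr_{X∼𝒟}[Q outputs 0 on X] ≥ 1 − ε. -/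
open scoped BigOperators ENNReal
open MeasureTheory

namespace GPW




/-- A cell of the `r × s` array. -/
abbrev Cell (r s : ℕ) := Fin r × Fin s

/-- An input to the pointer function: each cell holds a bit and an optional pointer. -/
abbrev Input (r s : ℕ) := Cell r s → Bool × Option (Cell r s)

/-- `GPWtrue r s X` holds iff the pointer function `GPW^{r×s}` evaluates to `1` on `X`. -/
def GPWtrue (r s : ℕ) (X : Input r s) : Prop :=
  ∃ jstar : Fin s,
    (∀ i : Fin r, (X (i, jstar)).1 = true) ∧
    (∀ j : Fin s, (∀ i : Fin r, (X (i, j)).1 = true) → j = jstar) ∧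
    ∃ istar : Fin r,
      (X (istar, jstar)).2 ≠ none ∧
      (∀ i : Fin r, (X (i, jstar)).2 ≠ none → i = istar) ∧
      ∃ p : Fin s → Cell r s,
        (∀ h0 : 0 < s, p ⟨0, h0⟩ = (istar, jstar)) ∧
        (∀ k : Fin s, ∀ hk : (k : ℕ) + 1 < s, (X (p k)).2 = some (p ⟨(k : ℕ) + 1, hk⟩)) ∧
        Function.Injective (fun k : Fin s => (p k).2) ∧
        (∀ k : Fin s, 1 ≤ (k : ℕ) → (X (p k)).1 = false)

/-- The pointer function as a Boolean-valued function. -/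
noncomputable def GPWbool (r s : ℕ) (X : Input r s) : Bool :=
  @decide (GPWtrue r s X) (Classical.propDecidable _)

/-- Deterministic decision trees over the cells of the array, with outputs in `β`.
A query to a cell reveals the full pair (bit, pointer) stored there. -/
inductive DTree (r s : ℕ) (β : Type) : Type
  | leaf : β → DTree r s β
  | query : Cell r s → (Bool × Option (Cell r s) → DTree r s β) → DTree r s β

namespace DTree
variable {r s : ℕ} {β : Type}

/-- The output of a decision tree on a given input. -/
def eval : DTree r s β → Input r s → β
  | .leaf b, _ => b
  | .query ℓ t, X => (t (X ℓ)).eval X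

/-- The number of cells queried by the tree on a given input. -/
def cost : DTree r s β → Input r s → ℕ
  | .leaf _, _ => 0
  | .query ℓ t, X => (t (X ℓ)).cost X + 1

/-- The set of cells queried by the tree on a given input. -/
def queried : DTree r s β → Input r s → Finset (Cell r s)
  | .leaf _, _ => ∅
  | .query ℓ t, X => insert ℓ ((t (X ℓ)).queried X)

end DTree

/-- Expected cost of a randomized algorithm (a distribution over deterministic trees). -/
noncomputable def expCost {r s : ℕ} {β : Type} (μ : PMF (DTree r s β)) (X : Input r s) : ℝ≥0∞ :=
  ∑' T, μ T * (DTree.cost T X : ℝ≥0∞)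

/-- A zero-error randomized algorithm for `f`: every tree in the support computes `f` exactly. -/
def ZeroError {r s : ℕ} (f : Input r s → Bool) (μ : PMF (DTree r s Bool)) : Prop :=
  ∀ T ∈ μ.support, ∀ X, DTree.eval T X = f X

/-- Zero-error randomized query complexity. -/
noncomputable def R0 {r s : ℕ} (f : Input r s → Bool) : ℝ≥0∞ :=
  ⨅ (μ : PMF (DTree r s Bool)) (_ : ZeroError f μ), ⨆ X : Input r s, expCost μ X

/-- A bounded-error (error `≤ 1/3`) randomized algorithm for `f`. -/
def BddError {r s : ℕ} (f : Input r s → Bool) (μ : PMF (DTree r s Bool)) : Prop :=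
  ∀ X : Input r s, (2/3 : ℝ≥0∞) ≤ μ.toOuterMeasure {T | DTree.eval T X = f X}

/-- Bounded-error randomized query complexity. -/
noncomputable def Rbdd {r s : ℕ} (f : Input r s → Bool) : ℝ≥0∞ :=
  ⨅ (μ : PMF (DTree r s Bool)) (_ : BddError f μ), ⨆ X : Input r s, expCost μ X


/-- `K = log₂ s − 3·log₂ log₂ s`, the number of blocks of `W`. -/
def KK (s : ℕ) : ℕ := Nat.log2 s - 3 * Nat.log2 (Nat.log2 s)

/-- The number of columns in each block of `W`, namely `s/(2K)`. -/
def blockWidth (s : ℕ) : ℕ := s / (2 * KK s)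

/-- The offset of a `W`-column `c` from the first column of `W`. -/
def colOff (s c : ℕ) : ℕ := c - s / 2

/-- The (1-based) index of the block containing `W`-column `c`. -/
def blkOf (s c : ℕ) : ℕ := colOff s c / blockWidth s + 1

/-- `w_j = s/(40·K·2^j)`, the number of columns of each band of block `W_j` (1-based `j`). -/
def bandWidth (s j : ℕ) : ℕ := s / (40 * KK s * 2 ^ j)

/-- The width of the band containing `W`-column `c`. -/
def wOf (s c : ℕ) : ℕ := bandWidth s (blkOf s c)

/-- The position of `W`-column `c` inside its band. -/
def posOf (s c : ℕ) : ℕ := colOff s c % blockWidth s % wOf s c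

/-- The leftmost column of the band containing column `c`; on each row the cells of the
band starting here form a segment. -/
def segStart (s c : ℕ) : ℕ := c - posOf s c

/-- Half the width of the band whose leftmost column is `c`. -/
def halfW (s c : ℕ) : ℕ := wOf s c / 2

/-- `(r,s)` is admissible: `s` is a power of two and all relevant quantities are integers
(`K ≥ 1`, `2K ∣ s`, and `w_j/2 = s/(80·K·2^j)` is an exact integer for each block `j`). -/
def Admissible (s : ℕ) : Prop :=
  (∃ k : ℕ, s = 2 ^ k) ∧ 0 < KK s ∧ (2 * KK s) ∣ s ∧
    ∀ j : ℕ, 1 ≤ j → j ≤ KK s → (80 * KK s * 2 ^ j) ∣ s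

/-- `c` is the leftmost column of some band (equivalently, of a segment on every row). -/
def IsSegStart (s : ℕ) (c : Fin s) : Prop := s / 2 ≤ (c : ℕ) ∧ posOf s (c : ℕ) = 0

instance (s : ℕ) : DecidablePred (IsSegStart s) := fun _ => by unfold IsSegStart; infer_instance

/-- Bands of `W` (equivalently segments, once a row is fixed), identified by their
leftmost column. -/
abbrev SegHeadCol (s : ℕ) := {c : Fin s // IsSegStart s c}

/-- `ℓ` is a cell lying in the left half of some segment of `W`. -/
def IsLH (r s : ℕ) (ℓ : Cell r s) : Prop :=
  s / 2 ≤ ((ℓ.2 : ℕ)) ∧ posOf s (ℓ.2 : ℕ) < halfW s (segStart s (ℓ.2 : ℕ))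

instance (r s : ℕ) : DecidablePred (IsLH r s) := fun _ => by unfold IsLH; infer_instance

/-- Cells in the left half of some segment of `W`. -/
abbrev LHCell (r s : ℕ) := {ℓ : Cell r s // IsLH r s ℓ}

/-- Cells of `V` (the first `s/2` columns). -/
abbrev VCell (r s : ℕ) := {ℓ : Cell r s // ((ℓ.2 : ℕ)) < s / 2}

/-- The cell `ℓ` belongs to the segment of band `β` in row `i`. -/
def InSegment (r s : ℕ) (i : Fin r) (β : SegHeadCol s) (ℓ : Cell r s) : Prop :=
  ℓ.1 = i ∧ s / 2 ≤ ((ℓ.2 : ℕ)) ∧ segStart s (ℓ.2 : ℕ) = ((β.1 : ℕ))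

/-- Column `c` belongs to band `β`. -/
def InBandCol (s : ℕ) (β : SegHeadCol s) (c : Fin s) : Prop :=
  s / 2 ≤ (c : ℕ) ∧ segStart s (c : ℕ) = ((β.1 : ℕ))

/-- Product of finitely many PMFs: independent coordinates. -/
noncomputable def pmfPi {ι : Type} [Fintype ι] [DecidableEq ι] {α : ι → Type}
    [∀ i, Fintype (α i)] (p : ∀ i, PMF (α i)) : PMF (∀ i, α i) :=
  ⟨fun g => ∏ i, p i (g i), by
    have h1 : ∀ i, ∑ x : α i, p i x = 1 := fun i => by
      have h := (p i).tsum_coe; rwa [tsum_fintype] at h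
    have h2 : ∑ g : ∀ i, α i, ∏ i, p i (g i) = 1 := by
      rw [← Fintype.piFinset_univ, ← Finset.prod_univ_sum]
      simp [h1]
    have h3 := hasSum_fintype (fun g : ∀ i, α i => ∏ i, p i (g i))
    rwa [h2] at h3⟩

/-- Index set of the per-segment random choices: a row together with a band. -/
abbrev WSeedIdx (r s : ℕ) := Fin r × SegHeadCol s

/-- The random data for one segment: a uniformly random ordering of the cells of its left
half, encoded as a permutation of `Fin (w/2)`. -/
abbrev WSeedFiber (r s : ℕ) (p : WSeedIdx r s) : Type := Equiv.Perm (Fin (halfW s ((p.2.1 : ℕ))))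

/-- All the random data determining the pointers of `W`. -/
abbrev WSeed (r s : ℕ) := ∀ p : WSeedIdx r s, WSeedFiber r s p

/-- Build the cell in row `i` and column `c`, if `c < s`. -/
def mkCell (r s : ℕ) (i : Fin r) (c : ℕ) : Option (Cell r s) :=
  if h : c < s then some (i, ⟨c, h⟩) else none

/-- The pointer stored at the `W`-cell `(i, c)`, built from the seed `g`: random pointer
chains in left halves of segments, left-to-right paths in right halves, chains concatenated
from left to right along each row, and `⊥` in the last column of `W`. -/
def ptrW {r s : ℕ} (g : WSeed r s) (i : Fin r) (c : Fin s) : Option (Cell r s) :=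
  if hc : segStart s (c : ℕ) < s then
    if hs : IsSegStart s ⟨segStart s (c : ℕ), hc⟩ then
      let π := g (i, ⟨⟨segStart s (c : ℕ), hc⟩, hs⟩)
      if hp : (c : ℕ) - segStart s (c : ℕ) < halfW s (segStart s (c : ℕ)) then
        -- `c` is in the left half: follow the random chain
        let k : ℕ := (π.symm ⟨(c : ℕ) - segStart s (c : ℕ), hp⟩ : Fin _)
        if hk : k + 1 < halfW s (segStart s (c : ℕ)) then
          mkCell r s i (segStart s (c : ℕ) + (π ⟨k + 1, hk⟩ : Fin _))
        else -- tail of the chain: point to the head of the right-half path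
          mkCell r s i (segStart s (c : ℕ) + halfW s (segStart s (c : ℕ)))
      else if (c : ℕ) + 1 < segStart s (c : ℕ) + 2 * halfW s (segStart s (c : ℕ)) then
        -- interior of the right-half path
        mkCell r s i ((c : ℕ) + 1)
      else if hn : (c : ℕ) + 1 < s then
        -- last cell of the segment: point to the head of the next segment's chain
        if hs' : IsSegStart s ⟨(c : ℕ) + 1, hn⟩ then
          let π' := g (i, ⟨⟨(c : ℕ) + 1, hn⟩, hs'⟩)
          if h0 : 0 < halfW s ((c : ℕ) + 1) then
            mkCell r s i ((c : ℕ) + 1 + (π' ⟨0, h0⟩ : Fin _))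
          else none
        else none
      else none -- last column of W: pointer is ⊥
    else none
  else none

/-- Build an input from the independent seeds for `V` and for `W`. -/
def buildInput {r s : ℕ} (gV : VCell r s → Option (LHCell r s)) (gW : WSeed r s) :
    Input r s :=
  fun ℓ =>
    if hv : ((ℓ.2 : ℕ)) < s / 2 then
      match gV ⟨ℓ, hv⟩ with
      | none => (true, none)
      | some t => (false, some t.1)
    else (false, ptrW gW ℓ.1 ℓ.2)

/-- `q = 500·log₂ s/√r` (as a probability, clamped at 1). -/
noncomputable def qProb (r s : ℕ) : ℝ≥0∞ :=
  min (ENNReal.ofReal (500 * Real.logb 2 s / Real.sqrt r)) 1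

/-- Distribution of the data of one `V`-cell: with probability `q` the bit is `0` and the
pointer is uniform over cells in left halves of segments of `W` (encoded `some t`); with
probability `1 − q` the bit is `1` and the pointer is `⊥` (encoded `none`). -/
noncomputable def vCoord (r s : ℕ) : PMF (Option (LHCell r s)) :=
  letI : Decidable (Nonempty (LHCell r s)) := Classical.propDecidable _
  (PMF.ofFintype (fun b => cond b (qProb r s) (1 - qProb r s))
    (by have h : qProb r s ≤ 1 := min_le_right _ _; simp [h])).bind fun b =>
    if b then
      if _hne : Nonempty (LHCell r s) then (PMF.uniformOfFintype (LHCell r s)).map some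
      else PMF.pure none
    else PMF.pure none

/-- Distribution of the data of one segment: a uniformly random ordering of its left half. -/
noncomputable def wCoord (r s : ℕ) (p : WSeedIdx r s) : PMF (WSeedFiber r s p) :=
  letI : Nonempty (WSeedFiber r s p) := ⟨Equiv.refl _⟩
  PMF.uniformOfFintype _

/-- The distribution `𝒟` on inputs from Section 2.1 of the paper. -/
noncomputable def Dist (r s : ℕ) : PMF (Input r s) :=
  (pmfPi fun _ : VCell r s => vCoord r s).bind fun gV =>
    (pmfPi (wCoord r s)).map fun gW => buildInput gV gW

/-- The edge relation of the bipartite graph `G_X` between a column `j` of `V` and a band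
`β` of `W`, relative to the set `Qs` of cells probed by the algorithm (conditions
(c1)–(c3)). -/
def GEdge {r s : ℕ} (X : Input r s) (Qs : Finset (Cell r s)) (j : Fin s) (β : SegHeadCol s) :
    Prop :=
  ∃ (i i' : Fin r) (u : Cell r s),
    (X (i, j)).2 = some u ∧
    -- (c1) the pointer at `(i,j)` lands in the left half of the segment of `β` in row `i'`
    InSegment r s i' β u ∧ (u.2 : ℕ) - ((β.1 : ℕ)) < halfW s ((β.1 : ℕ)) ∧
    -- (c2) the predecessor of the landing cell exists and is not probed
    (∃ u' : Cell r s, InSegment r s i' β u' ∧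
      (u'.2 : ℕ) - ((β.1 : ℕ)) < halfW s ((β.1 : ℕ)) ∧ (X u').2 = some u ∧ u' ∉ Qs) ∧
    -- (c3) fewer than `|p|/4` cells of the segment are probed
    4 * Nat.card {z : Cell r s // z ∈ Qs ∧ InSegment r s i' β z} < wOf s ((β.1 : ℕ))

/-! On the support of `𝒟` a bit `1` always comes with the pointer `⊥`, so no column can carry
the unique pointer that a `1`-input needs, and `GPW` vanishes there. Averaging the cost over
`𝒟` and over the algorithm, some tree in the support has expected cost at most
`c = √r·s/(log₂ s)^5` under `𝒟`. Cut off after `⌊c·log₂ s⌋` queries, it still never answers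
wrongly, and by Markov's inequality it is cut off with probability about `1/log₂ s < ε`. -/

end GPW

namespace PMF

variable {α : Type*}

theorem exists_mem_support_le_tsum_mul (p : PMF α) (f : α → ℝ≥0∞) :
    ∃ x ∈ p.support, f x ≤ ∑' x, p x * f x := by
  by_contra! hlt
  set m := ∑' x, p x * f x
  obtain ⟨x₀, hx₀⟩ := p.support_nonempty
  have hm : ∑' x, p x * m = m := by rw [ENNReal.tsum_mul_right, p.tsum_coe, one_mul]
  have hle : ∀ x, p x * m ≤ p x * f x := fun x => by
    by_cases hx : x ∈ p.support
    · gcongr; exact (hlt x hx).le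
    · simp [(p.apply_eq_zero_iff x).2 hx]
  have hlt₀ : p x₀ * m < p x₀ * f x₀ :=
    ENNReal.mul_lt_mul_right ((p.mem_support_iff x₀).1 hx₀) (p.apply_ne_top x₀) (hlt x₀ hx₀)
  have hm_top : ∑' x, p x * m ≠ ⊤ := by rw [hm]; exact ((hlt x₀ hx₀).trans_le le_top).ne
  have hmm := ENNReal.tsum_lt_tsum hm_top hle hlt₀
  rw [hm] at hmm
  exact hmm.false

theorem mul_toOuterMeasure_le_tsum_mul (p : PMF α) (f : α → ℝ≥0∞) (a : ℝ≥0∞) :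
    a * p.toOuterMeasure {x | a ≤ f x} ≤ ∑' x, p x * f x := by
  rw [toOuterMeasure_apply, ← ENNReal.tsum_mul_left]
  refine ENNReal.tsum_le_tsum fun x => ?_
  by_cases hx : a ≤ f x
  · rw [Set.indicator_of_mem (show x ∈ {x | a ≤ f x} from hx), mul_comm]
    gcongr
  · simp [Set.indicator_of_notMem (show x ∉ {x | a ≤ f x} from hx)]

theorem one_sub_le_toOuterMeasure_of_compl_le (p : PMF α) {s : Set α} {ε : ℝ≥0∞}
    (h : p.toOuterMeasure sᶜ ≤ ε) : 1 - ε ≤ p.toOuterMeasure s := by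
  have hone : p.toOuterMeasure (s ∪ sᶜ) = 1 := by
    rw [Set.union_compl_self, toOuterMeasure_apply_eq_one_iff]; exact Set.subset_univ _
  rw [tsub_le_iff_right, ← hone]
  exact (measure_union_le s sᶜ).trans (add_le_add_right h _)

end PMF

namespace GPW

namespace DTree

variable {r s : ℕ} {β : Type}

def trunc : ℕ → DTree r s β → DTree r s (Option β)
  | 0, _ => .leaf none
  | _ + 1, .leaf b => .leaf (some b)
  | n + 1, .query ℓ t => .query ℓ fun a => trunc n (t a)

theorem cost_trunc_le : ∀ (n : ℕ) (T : DTree r s β) (X : Input r s), (trunc n T).cost X ≤ n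
  | 0, T, X => by cases T <;> simp [trunc, cost]
  | _ + 1, .leaf _, X => by simp [trunc, cost]
  | n + 1, .query ℓ t, X => by simpa [trunc, cost] using cost_trunc_le n (t (X ℓ)) X

theorem eq_eval_of_eval_trunc_eq_some :
    ∀ (n : ℕ) (T : DTree r s β) (X : Input r s) (b : β),
      (trunc n T).eval X = some b → b = T.eval X
  | 0, _, _, _ => by simp [trunc, eval]
  | _ + 1, .leaf _, _, _ => by simp [trunc, eval, eq_comm]
  | n + 1, .query ℓ t, X, b => by
      simpa [trunc, eval] using eq_eval_of_eval_trunc_eq_some n (t (X ℓ)) X b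

theorem eval_trunc_of_cost_lt :
    ∀ (n : ℕ) (T : DTree r s β) (X : Input r s),
      T.cost X < n → (trunc n T).eval X = some (T.eval X)
  | 0, _, _, h => absurd h (Nat.not_lt_zero _)
  | _ + 1, .leaf _, _, _ => by simp [trunc, eval]
  | n + 1, .query ℓ t, X, h => by
      simpa [trunc, eval] using eval_trunc_of_cost_lt n (t (X ℓ)) X (by simpa [cost] using h)

end DTree

theorem snd_buildInput_eq_none {r s : ℕ} (gV : VCell r s → Option (LHCell r s)) (gW : WSeed r s)
    {ℓ : Cell r s} (h : (buildInput gV gW ℓ).1 = true) : (buildInput gV gW ℓ).2 = none := by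
  unfold buildInput at h ⊢
  split_ifs at h ⊢
  split at h <;> simp_all

theorem gpwBool_buildInput {r s : ℕ} (gV : VCell r s → Option (LHCell r s)) (gW : WSeed r s) :
    GPWbool r s (buildInput gV gW) = false := by
  rw [GPWbool, decide_eq_false_iff_not]
  rintro ⟨j, hcol, -, i, hptr, -⟩
  exact hptr (snd_buildInput_eq_none gV gW (hcol i))

theorem gpwBool_eq_false_of_mem_support_dist {r s : ℕ} {X : Input r s}
    (hX : X ∈ (Dist r s).support) : GPWbool r s X = false := by
  obtain ⟨gV, -, hX⟩ := (PMF.mem_support_bind_iff _ _ _).1 hX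
  obtain ⟨gW, -, rfl⟩ := (PMF.mem_support_map_iff _ _ _).1 hX
  exact gpwBool_buildInput gV gW

section Averaging

variable {r s : ℕ} {β : Type}

theorem exists_mem_support_tsum_cost_le (μ : PMF (DTree r s β)) (D : PMF (Input r s))
    {c : ℝ≥0∞} (h : ∀ X, expCost μ X ≤ c) :
    ∃ T ∈ μ.support, ∑' X, D X * T.cost X ≤ c := by
  obtain ⟨T, hT, hle⟩ := μ.exists_mem_support_le_tsum_mul fun T => ∑' X, D X * T.cost X
  refine ⟨T, hT, hle.trans ?_⟩
  calc ∑' T, μ T * ∑' X, D X * T.cost X = ∑' X, D X * expCost μ X := by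
        simp only [expCost, ← ENNReal.tsum_mul_left]
        rw [ENNReal.tsum_comm]
        simp only [mul_left_comm]
    _ ≤ ∑' X, D X * c := ENNReal.tsum_le_tsum fun X => by gcongr; exact h X
    _ = c := by rw [ENNReal.tsum_mul_right, D.tsum_coe, one_mul]

theorem one_sub_le_toOuterMeasure_eval_trunc (D : PMF (Input r s)) (T : DTree r s β) {N : ℕ}
    (hN : N ≠ 0) {ε : ℝ≥0∞} (h : ∑' X, D X * T.cost X ≤ ε * N) :
    1 - ε ≤ D.toOuterMeasure {X | (T.trunc N).eval X = some (T.eval X)} := by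
  refine D.one_sub_le_toOuterMeasure_of_compl_le ?_
  have hsub : {X | (T.trunc N).eval X = some (T.eval X)}ᶜ ⊆ {X | (N : ℝ≥0∞) ≤ T.cost X} := by
    intro X hX
    by_contra hlt
    exact hX (DTree.eval_trunc_of_cost_lt N T X (by simpa using hlt))
  have hmarkov : (N : ℝ≥0∞) * D.toOuterMeasure {X | (T.trunc N).eval X = some (T.eval X)}ᶜ ≤
      ε * N :=
    calc _ ≤ (N : ℝ≥0∞) * D.toOuterMeasure {X | (N : ℝ≥0∞) ≤ T.cost X} := by gcongr
      _ ≤ ε * N := (D.mul_toOuterMeasure_le_tsum_mul _ _).trans h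
  rw [mul_comm ε] at hmarkov
  exact (ENNReal.mul_le_mul_iff_right (by exact_mod_cast hN) (ENNReal.natCast_ne_top N)).1
    hmarkov

end Averaging

/-- `768 = 5! · 32/5`: the fifth Taylor term of `exp` at `x = exp (log 2 · log₂ x)`, together
with `(log 2)^5 > 5/32`. -/
theorem logb_two_pow_five_le {x : ℝ} (hx : 1 ≤ x) : Real.logb 2 x ^ 5 ≤ 768 * x := by
  have hL : 0 ≤ Real.logb 2 x := Real.logb_nonneg one_lt_two hx
  have hlog2 : 0.69 < Real.log 2 := by linarith [Real.log_two_gt_d9]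
  have hexp : x = Real.exp (Real.log 2 * Real.logb 2 x) := by
    rw [← Real.rpow_def_of_pos two_pos, Real.rpow_logb two_pos (by norm_num) (by linarith)]
  have htaylor := Real.pow_div_factorial_le_exp _ (mul_nonneg (Real.log_nonneg one_le_two) hL) 5
  rw [← hexp, mul_pow, Nat.factorial] at htaylor
  have hlog2pow : (0.69 : ℝ) ^ 5 ≤ Real.log 2 ^ 5 := pow_le_pow_left₀ (by norm_num) hlog2.le 5
  norm_num at htaylor hlog2pow
  nlinarith [pow_nonneg hL 5]

theorem one_le_sqrt_mul_div_logb_pow_five {s r : ℝ} (hs : 1 ≤ s) (hL : 2 ≤ Real.logb 2 s)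
    (hr : 250000 * Real.logb 2 s ^ 3 ≤ r) : 1 ≤ Real.sqrt r * s / Real.logb 2 s ^ 5 := by
  have hsqrt : 768 ≤ Real.sqrt r := by
    rw [Real.le_sqrt (by norm_num) (by nlinarith [pow_le_pow_left₀ (by norm_num) hL 3])]
    nlinarith [pow_le_pow_left₀ (by norm_num) hL 3]
  rw [one_le_div (by positivity)]
  nlinarith [logb_two_pow_five_le hs]

theorem le_mul_floor_mul {c ε L : ℝ} (hc : 1 ≤ c) (hε : 0 < ε) (hL : 1 + 1 / ε ≤ L) :
    c ≤ ε * ⌊c * L⌋₊ := by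
  have hfloor := Nat.sub_one_lt_floor (c * L)
  have hεL : ε + 1 ≤ ε * L := by
    have := mul_le_mul_of_nonneg_left hL hε.le
    rwa [mul_add, mul_one_div_cancel hε.ne', mul_one] at this
  nlinarith

/-- Proposition 6: from a zero-error randomized algorithm with expected
cost at most `√r·s/(log₂ s)^5` one gets a deterministic tree with outputs in
`{0, 1, no answer}` that makes at most `√r·s/(log₂ s)^4` queries, never answers wrongly,
and answers `0` with probability `≥ 1 − ε` over `X ∼ 𝒟`. -/
theorem exists_deterministic_from_zero_error :
    ∀ ε : ℝ, 0 < ε → ∃ s₀ : ℕ, ∀ s r : ℕ,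
      Admissible s → s₀ ≤ s → 250000 * Real.logb 2 s ^ 3 ≤ (r : ℝ) →
      (∃ μ : PMF (DTree r s Bool), ZeroError (GPWbool r s) μ ∧
        ∀ X : Input r s,
          expCost μ X ≤ ENNReal.ofReal (Real.sqrt r * s / Real.logb 2 s ^ 5)) →
      ∃ Q : DTree r s (Option Bool),
        (∀ X : Input r s, (DTree.cost Q X : ℝ) ≤ Real.sqrt r * s / Real.logb 2 s ^ 4) ∧
        (∀ X : Input r s, ∀ b : Bool, DTree.eval Q X = some b → b = GPWbool r s X) ∧
        1 - ENNReal.ofReal ε ≤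
          (Dist r s).toOuterMeasure {X : Input r s | DTree.eval Q X = some false} := by
  intro ε hε
  refine ⟨2 ^ (⌈1 / ε⌉₊ + 2), fun s r _ hs hr ⟨μ, hμ, hcost⟩ => ?_⟩
  set L := Real.logb 2 s
  set c := Real.sqrt r * s / L ^ 5
  have hs1 : (1 : ℝ) ≤ s := by exact_mod_cast Nat.one_le_two_pow.trans hs
  have hL : ((⌈1 / ε⌉₊ + 2 : ℕ) : ℝ) ≤ L := by
    rw [Real.le_logb_iff_rpow_le one_lt_two (by linarith), Real.rpow_natCast]
    exact_mod_cast hs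
  push_cast at hL
  have hc : 1 ≤ c :=
    one_le_sqrt_mul_div_logb_pow_five hs1 (by linarith [Nat.cast_nonneg (α := ℝ) ⌈1 / ε⌉₊]) hr
  have hN : c ≤ ε * ⌊c * L⌋₊ := le_mul_floor_mul hc hε (by linarith [Nat.le_ceil (1 / ε)])
  have hN0 : ⌊c * L⌋₊ ≠ 0 := fun h => by rw [h] at hN; norm_num at hN; linarith
  have hcL : c * L = Real.sqrt r * s / L ^ 4 := by
    have : L ≠ 0 := by linarith [Nat.cast_nonneg (α := ℝ) ⌈1 / ε⌉₊]
    simp only [c]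
    field_simp
  obtain ⟨T, hT, hTcost⟩ := exists_mem_support_tsum_cost_le μ (Dist r s) hcost
  refine ⟨T.trunc ⌊c * L⌋₊, fun X => ?_, fun X b hb => ?_, ?_⟩
  · rw [← hcL]
    exact (Nat.cast_le.2 (DTree.cost_trunc_le _ T X)).trans (Nat.floor_le (by nlinarith))
  · exact (DTree.eq_eval_of_eval_trunc_eq_some _ T X b hb).trans (hμ T hT X)
  · refine (one_sub_le_toOuterMeasure_eval_trunc (Dist r s) T hN0 (hTcost.trans ?_)).trans
      (PMF.toOuterMeasure_mono _ ?_)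
    · rw [← ENNReal.ofReal_natCast, ← ENNReal.ofReal_mul hε.le]
      exact ENNReal.ofReal_le_ofReal hN
    · rintro X ⟨hX, hXD⟩
      change _ = _
      rw [hX, hμ T hT X, gpwBool_eq_false_of_mem_support_dist hXD]

end GPW
end

section
/- (Sequential Chernoff bound with conditional probability bounds.) Let χ₁,…,χ_t be {0,1}-valued random variables on a common probability space, and let p ∈ [0,1] be such that for every i ∈ {1,…,t} and every σ ∈ {0,1}^{i−1} with Pr[(χ₁,…,χ_{i−1}) = σ] > 0, one has Pr[χᵢ = 1 ∣ (χ₁,…,χ_{i−1}) = σ] ≤ p. Then for every real u with u > 2e·p·t, one has Pr[χ₁ + ⋯ + χ_t > u] ≤ 2^{−u}. -/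
/-!
Let `k = ⌊u⌋₊ + 1`. If more than `u` of the `χᵢ` equal `1`, some `k`-set `S` of indices is
exactly the set of the first `k` ones, i.e. the history of `χ` up to `max S` is the indicator
of `S`. Peeling off the last step with the conditional hypothesis bounds the probability of a
fixed history by `p` to the number of ones in it, so a union bound over `S` gives
`Pr ≤ C(t,k) pᵏ ≤ (e t p / k)ᵏ ≤ 2⁻ᵏ ≤ 2⁻ᵘ`. Only monotonicity and subadditivity of `μ` enter,
so the `χᵢ` need not be measurable.
-/

open MeasureTheory Finset
open scoped ENNReal

theorem Nat.exists_eq_of_le_of_map_succ_le {f : ℕ → ℕ} (hf : ∀ n, f (n + 1) ≤ f n + 1)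
    {k n : ℕ} (h0 : f 0 ≤ k) (hn : k ≤ f n) : ∃ m, f m = k := by
  induction n with
  | zero => exact ⟨0, le_antisymm h0 hn⟩
  | succ n ih =>
    by_cases h : k ≤ f n
    · exact ih h
    · exact ⟨n + 1, by have := hf n; omega⟩

namespace Fin

variable {t : ℕ} (σ : Fin t → Bool)

theorem card_filter_val_lt_succ_le (n : ℕ) :
    #{j : Fin t | (j : ℕ) < n + 1 ∧ σ j} ≤ #{j : Fin t | (j : ℕ) < n ∧ σ j} + 1 := by
  simp only [Nat.lt_succ_iff_lt_or_eq, or_and_right, filter_or]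
  refine (card_union_le _ _).trans (Nat.add_le_add_left (card_le_one.2 fun a ha b hb => ?_) _)
  simp only [mem_filter] at ha hb
  exact Fin.ext (ha.2.1.trans hb.2.1.symm)

theorem card_filter_val_lt_succ (i : Fin t) :
    #{j : Fin t | (j : ℕ) < i + 1 ∧ σ j} = #{j : Fin t | (j : ℕ) < i ∧ σ j} + (σ i).toNat := by
  simp only [Nat.lt_succ_iff_lt_or_eq, or_and_right, filter_or]
  rw [card_union_of_disjoint (disjoint_filter.2 fun j _ h1 h2 => by omega)]
  congr 1
  cases h : σ i <;> simp [Fin.val_inj, filter_and, filter_eq', h]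

end Fin

section History

variable {Ω : Type*} {t : ℕ}

def historyEvent (χ : Fin t → Ω → Bool) (σ : Fin t → Bool) (n : ℕ) : Set Ω :=
  {ω | ∀ j : Fin t, (j : ℕ) < n → χ j ω = σ j}

lemma historyEvent_succ (χ : Fin t → Ω → Bool) (σ : Fin t → Bool) (i : Fin t) :
    historyEvent χ σ (i + 1) = {ω | χ i ω = σ i} ∩ historyEvent χ σ i := by
  ext ω
  simp only [historyEvent, Set.mem_ofPred_eq, Set.mem_inter_iff, Nat.lt_succ_iff_lt_or_eq, or_imp,
    forall_and]
  constructor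
  · rintro ⟨h1, h2⟩; exact ⟨h2 i rfl, h1⟩
  · rintro ⟨h1, h2⟩; exact ⟨h2, fun j hj => (Fin.ext hj) ▸ h1⟩

/-- The event that `S` is the set of the first `#S` true coordinates of `χ · ω`. -/
def firstOnesEvent (χ : Fin t → Ω → Bool) (S : Finset (Fin t)) : Set Ω :=
  historyEvent χ (fun j => decide (j ∈ S)) (S.sup fun j => (j : ℕ) + 1)

lemma exists_card_eq_mem_firstOnesEvent (χ : Fin t → Ω → Bool) {k : ℕ} {ω : Ω}
    (hk : k ≤ #{i | χ i ω}) : ∃ S : Finset (Fin t), #S = k ∧ ω ∈ firstOnesEvent χ S := by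
  obtain ⟨m, hm⟩ : ∃ m, #{j : Fin t | (j : ℕ) < m ∧ χ j ω} = k := by
    refine Nat.exists_eq_of_le_of_map_succ_le (Fin.card_filter_val_lt_succ_le _) (n := t)
      (by simp) ?_
    simpa using hk
  refine ⟨({j | (j : ℕ) < m ∧ χ j ω} : Finset (Fin t)), hm, fun j hj => ?_⟩
  have hjm : (j : ℕ) < m :=
    hj.trans_le (Finset.sup_le fun i hi => (mem_filter.1 hi).2.1)
  simp [hjm]

variable [MeasurableSpace Ω]

def HasCondProbTrueLE (μ : Measure Ω) (χ : Fin t → Ω → Bool) (q : ℝ≥0∞) : Prop :=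
  ∀ (i : Fin t) (σ : Fin t → Bool),
    μ ({ω | χ i ω = true} ∩ historyEvent χ σ i) ≤ q * μ (historyEvent χ σ i)

variable (μ : Measure Ω) [IsZeroOrProbabilityMeasure μ] (χ : Fin t → Ω → Bool) (q : ℝ≥0∞)

lemma measure_historyEvent_le (hcond : HasCondProbTrueLE μ χ q) (σ : Fin t → Bool) {n : ℕ}
    (hn : n ≤ t) :
    μ (historyEvent χ σ n) ≤ q ^ #{j : Fin t | (j : ℕ) < n ∧ σ j} := by
  induction n with
  | zero => simp [historyEvent, prob_le_one]
  | succ n ih =>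
    let i : Fin t := ⟨n, hn⟩
    have ih' := ih (Nat.le_of_succ_le hn)
    rw [historyEvent_succ χ σ i, Fin.card_filter_val_lt_succ σ i]
    cases hσ : σ i
    · rw [Bool.toNat_false, add_zero]
      exact (measure_mono Set.inter_subset_right).trans ih'
    · rw [Bool.toNat_true, pow_succ']
      exact (hcond i σ).trans (by gcongr)

lemma measure_firstOnesEvent_le (hcond : HasCondProbTrueLE μ χ q) (S : Finset (Fin t)) :
    μ (firstOnesEvent χ S) ≤ q ^ #S := by
  refine (measure_historyEvent_le μ χ q hcond _ (Finset.sup_le fun j _ => j.isLt)).trans_eq ?_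
  congr 2
  ext j
  simpa using fun hj => Nat.lt_of_succ_le (le_sup (f := fun j : Fin t => (j : ℕ) + 1) hj)

lemma measure_setOf_le_card_le_choose_mul_pow (hcond : HasCondProbTrueLE μ χ q) (k : ℕ) :
    μ {ω | k ≤ #{i | χ i ω}} ≤ t.choose k * q ^ k := by
  calc μ {ω | k ≤ #{i | χ i ω}} ≤ μ (⋃ S ∈ powersetCard k univ, firstOnesEvent χ S) := by
        refine measure_mono fun ω hω => ?_
        obtain ⟨S, hS, hωS⟩ := exists_card_eq_mem_firstOnesEvent χ hω
        exact Set.mem_iUnion₂.2 ⟨S, mem_powersetCard_univ.2 hS, hωS⟩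
    _ ≤ ∑ S ∈ powersetCard k univ, μ (firstOnesEvent χ S) := measure_biUnion_finset_le _ _
    _ ≤ ∑ _S ∈ powersetCard k univ, q ^ k := by
        refine sum_le_sum fun S hS => ?_
        rw [← (mem_powersetCard_univ.1 hS)]
        exact measure_firstOnesEvent_le μ χ q hcond S
    _ = t.choose k * q ^ k := by simp [card_powersetCard]

end History

open Real in
theorem choose_mul_pow_le (t k : ℕ) {x : ℝ} (hx : 0 ≤ x) :
    t.choose k * x ^ k ≤ (exp 1 * t * x / k) ^ k := by
  rcases k.eq_zero_or_pos with rfl | hk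
  · simp
  calc t.choose k * x ^ k ≤ (t : ℝ) ^ k / k.factorial * x ^ k := by
        gcongr; exact Nat.choose_le_pow_div k t
    _ = (t * x) ^ k * ((k : ℝ) ^ k / k.factorial) / (k : ℝ) ^ k := by
        field_simp; ring
    _ ≤ (t * x) ^ k * exp 1 ^ k / (k : ℝ) ^ k := by
        gcongr
        rw [exp_one_pow]
        exact pow_div_factorial_le_exp _ (Nat.cast_nonneg k) k
    _ = (exp 1 * t * x / k) ^ k := by ring

open Real in
theorem choose_mul_pow_le_two_rpow_neg {t k : ℕ} {p u : ℝ} (hp : 0 ≤ p)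
    (hu : 2 * exp 1 * p * t < u) (huk : u ≤ k) :
    t.choose k * p ^ k ≤ (2 : ℝ) ^ (-u) := by
  have hk : (0 : ℝ) < k := by
    have : 0 ≤ 2 * exp 1 * p * t := by positivity
    linarith
  calc t.choose k * p ^ k ≤ (exp 1 * t * p / k) ^ k := choose_mul_pow_le t k hp
    _ ≤ (1 / 2) ^ k := by
        refine pow_le_pow_left₀ (by positivity) ?_ k
        rw [div_le_iff₀ hk]
        linarith
    _ = (2 : ℝ) ^ (-(k : ℝ)) := by rw [rpow_neg zero_le_two, rpow_natCast, one_div, inv_pow]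
    _ ≤ (2 : ℝ) ^ (-u) := rpow_le_rpow_of_exponent_le one_le_two (by linarith)

theorem sequential_chernoff_bound_general
    {Ω : Type*} [MeasurableSpace Ω] (μ : Measure Ω) [IsProbabilityMeasure μ]
    {t : ℕ} (χ : Fin t → Ω → Bool) (p : ℝ) (hp0 : 0 ≤ p)
    (hcond : ∀ (i : Fin t) (σ : Fin t → Bool),
      μ ({ω | χ i ω = true} ∩ {ω | ∀ j : Fin t, j < i → χ j ω = σ j}) ≤
        ENNReal.ofReal p * μ {ω | ∀ j : Fin t, j < i → χ j ω = σ j})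
    (u : ℝ) (hu : 2 * Real.exp 1 * p * t < u) :
    μ {ω | u < ∑ i, (if χ i ω = true then (1 : ℝ) else 0)} ≤
      ENNReal.ofReal ((2 : ℝ) ^ (-u)) := by
  have hu0 : 0 ≤ u := (by positivity : 0 ≤ 2 * Real.exp 1 * p * t).trans hu.le
  set k := ⌊u⌋₊ + 1
  have huk : u ≤ k := by simpa [k] using (Nat.lt_floor_add_one u).le
  have hsub : {ω | u < ∑ i, (if χ i ω = true then (1 : ℝ) else 0)} ⊆ {ω | k ≤ #{i | χ i ω}} := by
    intro ω hω
    simp only [Set.mem_ofPred_eq, sum_boole] at hω ⊢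
    exact (Nat.floor_lt hu0).2 hω
  calc μ {ω | u < ∑ i, (if χ i ω = true then (1 : ℝ) else 0)}
      ≤ μ {ω | k ≤ #{i | χ i ω}} := measure_mono hsub
    _ ≤ t.choose k * ENNReal.ofReal p ^ k := measure_setOf_le_card_le_choose_mul_pow μ χ _ hcond k
    _ = ENNReal.ofReal (t.choose k * p ^ k) := by
        rw [ENNReal.ofReal_mul (by positivity), ENNReal.ofReal_natCast, ENNReal.ofReal_pow hp0]
    _ ≤ ENNReal.ofReal ((2 : ℝ) ^ (-u)) :=
        ENNReal.ofReal_le_ofReal (choose_mul_pow_le_two_rpow_neg hp0 hu huk)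

/-- sequential Chernoff bound, as used in the Claim on `n₄`: if
`χ₁, …, χ_t` are Boolean random variables such that, conditioned on any outcome of the
preceding variables, each `χᵢ` equals `1` with probability at most `p` (expressed
multiplicatively, which also covers histories of probability zero), then for every
`u > 2e·p·t` we have `Pr[χ₁ + ⋯ + χ_t > u] ≤ 2^{−u}`. -/
theorem sequential_chernoff_bound
    {Ω : Type*} [MeasurableSpace Ω] (μ : Measure Ω) [IsProbabilityMeasure μ]
    {t : ℕ} (χ : Fin t → Ω → Bool) (p : ℝ) (hp0 : 0 ≤ p) (hp1 : p ≤ 1)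
    (hcond : ∀ (i : Fin t) (σ : Fin t → Bool),
      μ ({ω | χ i ω = true} ∩ {ω | ∀ j : Fin t, j < i → χ j ω = σ j}) ≤
        ENNReal.ofReal p * μ {ω | ∀ j : Fin t, j < i → χ j ω = σ j})
    (u : ℝ) (hu : 2 * Real.exp 1 * p * t < u) :
    μ {ω | u < ∑ i, (if χ i ω = true then (1 : ℝ) else 0)} ≤
      ENNReal.ofReal ((2 : ℝ) ^ (-u)) :=
  sequential_chernoff_bound_general μ χ p hp0 hcond u hu
end

section
/- There is a constant c > 0 such that for all integers r, s ≥ 2, the certificate complexity of the pointer function satisfies C(GPW^{r×s}) ≥ c·(r + s). -/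
open scoped BigOperators ENNReal
open MeasureTheory

namespace GPW




/-- `S` is a certificate for `f` at `X`: every input agreeing with `X` on `S` has the same
value of `f`. -/
def Certifies {r s : ℕ} (f : Input r s → Bool) (X : Input r s) (S : Finset (Cell r s)) :
    Prop :=
  ∀ X' : Input r s, (∀ ℓ ∈ S, X' ℓ = X ℓ) → f X' = f X

/-- The certificate complexity of `f` at `X`: the least size of a certificate. -/
noncomputable def certCompAt {r s : ℕ} (f : Input r s → Bool) (X : Input r s) : ℕ :=
  sInf {n : ℕ | ∃ S : Finset (Cell r s), S.card = n ∧ Certifies f X S}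

/-- The certificate complexity of `f`. -/
noncomputable def certComp {r s : ℕ} (f : Input r s → Bool) : ℕ :=
  ⨆ X : Input r s, certCompAt f X

/-! ### Auxiliary development for the certificate complexity lower bound -/

lemma gpwbool_iff (r s : ℕ) (X : Input r s) : GPWbool r s X = true ↔ GPWtrue r s X := by
  unfold GPWbool
  exact @decide_eq_true_iff _ (Classical.propDecidable _)

lemma certifies_univ {r s : ℕ} (f : Input r s → Bool) (X : Input r s) :
    Certifies f X Finset.univ := by
  intro X' h
  have : X' = X := funext fun ℓ => h ℓ (Finset.mem_univ ℓ)
  rw [this]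

lemma certCompAt_le_certComp {r s : ℕ} (f : Input r s → Bool) (X : Input r s) :
    certCompAt f X ≤ certComp f := by
  apply le_ciSup (f := fun X => certCompAt f X)
  refine ⟨(Finset.univ : Finset (Cell r s)).card, ?_⟩
  rintro _ ⟨Y, rfl⟩
  exact Nat.sInf_le ⟨Finset.univ, rfl, certifies_univ f Y⟩

/-- The hard input: column 0 all-true, pointer chain along row 0. -/
def hX (r s : ℕ) (hr : 0 < r) : Input r s := fun ℓ =>
  (decide ((ℓ.2 : ℕ) = 0),
    if h : (ℓ.1 : ℕ) = 0 ∧ (ℓ.2 : ℕ) + 1 < s then some (⟨0, hr⟩, ⟨(ℓ.2 : ℕ) + 1, h.2⟩)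
    else none)

lemma hX_fst (r s : ℕ) (hr : 0 < r) (ℓ : Cell r s) :
    (hX r s hr ℓ).1 = decide ((ℓ.2 : ℕ) = 0) := rfl

lemma hX_true (r s : ℕ) (hr : 0 < r) (hs : 2 ≤ s) : GPWtrue r s (hX r s hr) := by
  have hs0 : 0 < s := by omega
  refine ⟨⟨0, hs0⟩, ?_, ?_, ⟨0, hr⟩, ?_, ?_, fun k => (⟨0, hr⟩, k), ?_, ?_, ?_, ?_⟩
  · intro i; simp [hX]
  · intro j hj
    have := hj ⟨0, hr⟩
    simp [hX] at this
    exact Fin.ext this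
  · simp [hX]
    omega
  · intro i hi
    by_contra hne
    have hi0 : (i : ℕ) ≠ 0 := by
      intro h; exact hne (Fin.ext h)
    simp [hX, hi0] at hi
  · intro h0; rfl
  · intro k hk
    simp [hX]
    exact hk
  · intro a b hab
    simpa using hab
  · intro k hk
    simp [hX]
    omega

/-- Flipping a bit in column 0 makes the function false. -/
lemma bitflip_false (r s : ℕ) (hr : 0 < r) (hs : 0 < s) (i : Fin r) (v : Option (Cell r s)) :
    ¬ GPWtrue r s (Function.update (hX r s hr) (i, ⟨0, hs⟩) (false, v)) := by
  rintro ⟨jstar, h1, -⟩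
  have := h1 i
  rcases eq_or_ne jstar ⟨0, hs⟩ with h | h
  · subst h
    rw [Function.update_self] at this
    exact Bool.false_ne_true this
  · rw [Function.update_of_ne (by simp [Prod.ext_iff, h])] at this
    rw [hX_fst] at this
    have hj : (jstar : ℕ) = 0 := by simpa using this
    exact h (Fin.ext hj)

/-- Removing a pointer on the chain makes the function false. -/
lemma ptrflip_false (r s : ℕ) (hr : 0 < r) (k : ℕ) (hk : k + 1 < s) :
    ¬ GPWtrue r s
      (Function.update (hX r s hr) (⟨0, hr⟩, ⟨k, by omega⟩) (decide (k = 0), none)) := by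
  set c : Cell r s := (⟨0, hr⟩, ⟨k, by omega⟩) with hc
  set X' := Function.update (hX r s hr) c (decide (k = 0), none) with hXdef
  have hs0 : 0 < s := by omega
  rintro ⟨jstar, h1, h2, istar, hne, huniq, p, hp0, hstep, hinj, hbits⟩
  have hbit : ∀ ℓ : Cell r s, (X' ℓ).1 = decide ((ℓ.2 : ℕ) = 0) := by
    intro ℓ
    rcases eq_or_ne ℓ c with h | h
    · subst h
      rw [hXdef, Function.update_self]
    · rw [hXdef, Function.update_of_ne h, hX_fst]
  have hjstar : jstar = ⟨0, hs0⟩ := by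
    have := h1 ⟨0, hr⟩
    rw [hbit] at this
    exact Fin.ext (by simpa using this)
  subst hjstar
  have hik : ¬ ((istar : ℕ) = 0 ∧ k = 0) := by
    rintro ⟨hi0, hk0⟩
    apply hne
    have hcc : ((istar, (⟨0, hs0⟩ : Fin s)) : Cell r s) = c := by
      rw [hc]
      exact Prod.ext (Fin.ext hi0) (Fin.ext (by simp [hk0]))
    rw [hXdef, hcc, Function.update_self]
  have hcell : ((istar, (⟨0, hs0⟩ : Fin s)) : Cell r s) ≠ c := by
    intro h
    apply hik
    rw [hc, Prod.ext_iff] at h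
    have h1' : (istar : ℕ) = 0 := by
      have := congrArg Fin.val h.1; simpa using this
    have h2' : (0 : ℕ) = k := by
      have := congrArg Fin.val h.2; simpa using this
    exact ⟨h1', h2'.symm⟩
  rw [hXdef, Function.update_of_ne hcell] at hne
  have histar : (istar : ℕ) = 0 := by
    by_contra hi
    apply hne
    simp [hX, hi]
  have hknz : k ≠ 0 := fun h => hik ⟨histar, h⟩
  have key : ∀ m, ∀ hm : m ≤ k, p ⟨m, by omega⟩ = (⟨0, hr⟩, ⟨m, by omega⟩) := by
    intro m
    induction m with
    | zero =>
      intro _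
      rw [hp0 hs0]
      exact Prod.ext (Fin.ext histar) rfl
    | succ m ih =>
      intro hm
      have hms : m + 1 < s := by omega
      have hstep' := hstep ⟨m, by omega⟩ (by simpa using hms)
      rw [ih (by omega)] at hstep'
      have hmc : ((⟨0, hr⟩ : Fin r), (⟨m, by omega⟩ : Fin s)) ≠ c := by
        intro h
        rw [hc, Prod.ext_iff] at h
        have := congrArg Fin.val h.2
        simp at this
        omega
      rw [hXdef, Function.update_of_ne hmc] at hstep'
      have : (hX r s hr ((⟨0, hr⟩ : Fin r), (⟨m, by omega⟩ : Fin s))).2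
          = some ((⟨0, hr⟩ : Fin r), (⟨m + 1, by omega⟩ : Fin s)) := by
        simp [hX, hms]
      rw [this] at hstep'
      exact (Option.some_injective _ hstep').symm
  have hfin := hstep ⟨k, by omega⟩ (by simpa using hk)
  rw [key k le_rfl] at hfin
  have : ((⟨0, hr⟩ : Fin r), (⟨k, by omega⟩ : Fin s)) = c := rfl
  rw [this, hXdef, Function.update_self] at hfin
  simp at hfin

/-- Counting: a certificate containing all of column 0 and the chain has size `≥ r + s - 2`. -/
lemma card_lb {r s : ℕ} (hr : 2 ≤ r) (hs : 2 ≤ s) (S : Finset (Cell r s))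
    (hA : ∀ i : Fin r, (i, (⟨0, by omega⟩ : Fin s)) ∈ S)
    (hB : ∀ k : ℕ, ∀ hk : k + 1 < s, ((⟨0, by omega⟩ : Fin r), (⟨k, by omega⟩ : Fin s)) ∈ S) :
    r + s - 2 ≤ S.card := by
  have hr0 : 0 < r := by omega
  have hs0 : 0 < s := by omega
  set φ : Fin (r + (s - 2)) → Cell r s := fun m =>
    if h : (m : ℕ) < r then (⟨m, h⟩, ⟨0, hs0⟩)
    else (⟨0, hr0⟩, ⟨(m : ℕ) - r + 1, by have := m.2; omega⟩) with hφ
  have hinj : Function.Injective φ := by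
    intro a b hab
    rw [hφ] at hab
    dsimp only at hab
    apply Fin.ext
    have ha := a.2; have hb := b.2
    by_cases h1 : (a : ℕ) < r <;> by_cases h2 : (b : ℕ) < r <;>
        simp only [h1, h2, dif_pos, dif_neg, not_false_iff] at hab <;>
        have e1 := congrArg (fun x : Cell r s => (x.1 : ℕ)) hab <;>
        have e2 := congrArg (fun x : Cell r s => (x.2 : ℕ)) hab <;>
        simp only at e1 e2 <;> omega
  have hsub : Finset.univ.image φ ⊆ S := by
    intro x hx
    rw [Finset.mem_image] at hx
    obtain ⟨m, -, rfl⟩ := hx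
    rw [hφ]
    by_cases h : (m : ℕ) < r
    · simp only [h, dif_pos]
      exact hA _
    · simp only [h, dif_neg, not_false_iff]
      have := m.2
      exact hB _ (by omega)
  calc r + s - 2 = r + (s - 2) := by omega
    _ = Fintype.card (Fin (r + (s - 2))) := by simp
    _ = (Finset.univ.image φ).card := by
        rw [Finset.card_image_of_injective _ hinj, Finset.card_univ]
    _ ≤ S.card := Finset.card_le_card hsub

/-- Every certificate at the hard input has size `≥ r + s - 2`. -/
lemma cert_ge {r s : ℕ} (hr : 2 ≤ r) (hs : 2 ≤ s) (S : Finset (Cell r s))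
    (hS : Certifies (GPWbool r s) (hX r s (by omega)) S) : r + s - 2 ≤ S.card := by
  have hr0 : 0 < r := by omega
  have hs0 : 0 < s := by omega
  have hXtrue : GPWbool r s (hX r s hr0) = true := (gpwbool_iff _ _ _).2 (hX_true r s hr0 hs)
  apply card_lb hr hs S
  · -- column 0 is in S
    intro i
    by_contra hiS
    set c : Cell r s := (i, ⟨0, hs0⟩) with hc
    set X' := Function.update (hX r s hr0) c (false, (hX r s hr0 c).2) with hXdef
    have hagree : ∀ ℓ ∈ S, X' ℓ = hX r s hr0 ℓ := by
      intro ℓ hℓ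
      rw [hXdef, Function.update_of_ne (fun h => hiS (by rw [← h]; exact hℓ))]
    have := hS X' hagree
    rw [hXtrue, gpwbool_iff] at this
    exact bitflip_false r s hr0 hs0 i _ this
  · -- the chain is in S
    intro k hk
    by_contra hkS
    set c : Cell r s := (⟨0, hr0⟩, ⟨k, by omega⟩) with hc
    set X' := Function.update (hX r s hr0) c (decide (k = 0), none) with hXdef
    have hagree : ∀ ℓ ∈ S, X' ℓ = hX r s hr0 ℓ := by
      intro ℓ hℓ
      rw [hXdef, Function.update_of_ne (fun h => hkS (by rw [← h]; exact hℓ))]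
    have := hS X' hagree
    rw [hXtrue, gpwbool_iff] at this
    exact ptrflip_false r s hr0 k hk this

lemma certComp_ge (r s : ℕ) (hr : 2 ≤ r) (hs : 2 ≤ s) :
    r + s - 2 ≤ certComp (GPWbool r s) := by
  have hr0 : 0 < r := by omega
  refine le_trans ?_ (certCompAt_le_certComp (GPWbool r s) (hX r s hr0))
  apply le_csInf
  · exact ⟨_, Finset.univ, rfl, certifies_univ _ _⟩
  · rintro n ⟨S, rfl, hcert⟩
    exact cert_ge hr hs S hcert

/-- the certificate complexity of the pointer function is `Ω(r + s)`. -/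
theorem certComp_GPW_lower_bound :
    ∃ c : ℝ, 0 < c ∧ ∀ r s : ℕ, 2 ≤ r → 2 ≤ s →
      c * ((r : ℝ) + s) ≤ (certComp (GPWbool r s) : ℝ) := by
  refine ⟨1/2, by norm_num, fun r s hr hs => ?_⟩
  have h := certComp_ge r s hr hs
  have h2 : ((r + s - 2 : ℕ) : ℝ) ≤ (certComp (GPWbool r s) : ℝ) := by exact_mod_cast h
  have hcast : ((r + s - 2 : ℕ) : ℝ) = (r : ℝ) + s - 2 := by
    have : 2 ≤ r + s := by omega
    push_cast [Nat.cast_sub this]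
    ring
  rw [hcast] at h2
  have hr' : (2 : ℝ) ≤ r := by exact_mod_cast hr
  have hs' : (2 : ℝ) ≤ s := by exact_mod_cast hs
  linarith

end GPW
end
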